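/- arXiv:1603.06758 — 2 statements merged into one kernel-verified Lean document; each statement's English description precedes it below -/
import Mathlib

section
/- For every real number x ≥ 1, the partial sum Σ_{n ≤ x} μ(n)/n satisfies |Σ_{n ≤ x} μ(n)/n| ≤ 1. -/
open ArithmeticFunction
open scoped ArithmeticFunction.Moebius

/-!
Since `μ * ζ = 1`, for `N ≥ 1` we have `∑_{n ≤ N} μ(n) ⌊N/n⌋ = 1`. Writing `N/n = ⌊N/n⌋ + {N/n}`
gives `N ∑_{n ≤ N} μ(n)/n = 1 + ∑_{2 ≤ n ≤ N} μ(n) {N/n}`, and the last sum has `N - 1` terms of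
absolute value less than `1`.
-/

open Finset Int

theorem natCast_div_eq_div_add_fract {k : Type*} [Field k] [LinearOrder k] [IsStrictOrderedRing k]
    [FloorRing k] (m n : ℕ) : (m : k) / n = (m / n : ℕ) + fract ((m : k) / n) := by
  rw [← Nat.floor_div_eq_div (K := k), natCast_floor_eq_intCast_floor (by positivity),
    floor_add_fract]

theorem sum_Icc_fract_div_le {k : Type*} [Field k] [LinearOrder k] [IsStrictOrderedRing k]
    [FloorRing k] (N : ℕ) : ∑ n ∈ Icc 1 N, fract ((N : k) / n) ≤ (N - 1 : ℕ) := by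
  rcases N.eq_zero_or_pos with rfl | hN
  · simp
  rw [← add_sum_Ioc_eq_sum_Icc hN, Nat.cast_one, div_one, fract_natCast, zero_add,
    ← Nat.card_Ioc 1 N]
  simpa only [nsmul_one] using sum_le_card_nsmul _ _ (1 : k) fun n _ => (fract_lt_one _).le

theorem sum_Icc_moebius_mul_div_eq_one {R : Type*} [Ring R] {N : ℕ} (hN : 0 < N) :
    ∑ n ∈ Icc 1 N, (μ n : R) * (N / n : ℕ) = 1 := by
  have h := sum_Ioc_mul_zeta_eq_sum (μ : ArithmeticFunction R) N
  rw [coe_moebius_mul_coe_zeta] at h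
  simp only [intCoe_apply] at h
  rw [← zero_add 1, Icc_add_one_left_eq_Ioc, ← h]
  simp [one_apply, hN.ne']

theorem abs_sum_moebius_mul_le_sum_abs {R : Type*} [Ring R] [LinearOrder R] [IsStrictOrderedRing R]
    (s : Finset ℕ) (f : ℕ → R) : |∑ n ∈ s, (μ n : R) * f n| ≤ ∑ n ∈ s, |f n| := by
  refine (abs_sum_le_sum_abs _ _).trans (sum_le_sum fun n _ => ?_)
  rw [abs_mul]
  exact mul_le_of_le_one_left (abs_nonneg _) (mod_cast abs_moebius_le_one)

theorem abs_sum_Icc_moebius_div_le_one (N : ℕ) : |∑ n ∈ Icc 1 N, (μ n : ℝ) / n| ≤ 1 := by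
  rcases N.eq_zero_or_pos with rfl | hN
  · simp
  set error := ∑ n ∈ Icc 1 N, (μ n : ℝ) * fract ((N : ℝ) / n)
  have hdecomp : N * ∑ n ∈ Icc 1 N, (μ n : ℝ) / n = 1 + error := by
    rw [mul_sum, ← sum_Icc_moebius_mul_div_eq_one hN, ← sum_add_distrib]
    refine sum_congr rfl fun n _ => ?_
    rw [← mul_add, ← natCast_div_eq_div_add_fract]
    ring
  have herror : |error| ≤ N - 1 := calc
    _ ≤ ∑ n ∈ Icc 1 N, |fract ((N : ℝ) / n)| := abs_sum_moebius_mul_le_sum_abs _ _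
    _ = ∑ n ∈ Icc 1 N, fract ((N : ℝ) / n) :=
      sum_congr rfl fun n _ => abs_of_nonneg (fract_nonneg _)
    _ ≤ (N - 1 : ℕ) := sum_Icc_fract_div_le N
    _ = N - 1 := by rw [Nat.cast_sub hN, Nat.cast_one]
  have hN' : (0 : ℝ) < N := by exact_mod_cast hN
  have hbound : |(N : ℝ) * ∑ n ∈ Icc 1 N, (μ n : ℝ) / n| ≤ N := calc
    _ = |1 + error| := by rw [hdecomp]
    _ ≤ |1| + |error| := abs_add_le _ _
    _ ≤ N := by rw [abs_one]; linarith
  rwa [abs_mul, abs_of_pos hN', mul_le_iff_le_one_right hN'] at hbound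

theorem abs_sum_moebius_div_le_one_general (x : ℝ) :
    |∑ n ∈ Finset.Icc 1 ⌊x⌋₊, (μ n : ℝ) / n| ≤ 1 :=
  abs_sum_Icc_moebius_div_le_one ⌊x⌋₊

theorem abs_sum_moebius_div_le_one (x : ℝ) (hx : 1 ≤ x) :
    |∑ n ∈ Finset.Icc 1 ⌊x⌋₊, (μ n : ℝ) / n| ≤ 1 :=
  abs_sum_moebius_div_le_one_general x
end

section
/- For every real number x ≥ 1, the partial sum of the Liouville function satisfies |Σ_{n ≤ x} λ(n)/n| < 2. -/
open ArithmeticFunction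

/-- The Liouville function `λ(n) = (-1)^Ω(n)`. -/
def liouville (n : ℕ) : ℤ := (-1) ^ (cardFactors n)

/-!
As `λ` is multiplicative with `λ(p^k) = (-1)^k`, `∑_{d ∣ n} λ(d)` is `1` when `n` is a perfect
square and `0` otherwise. Summing over `n ≤ N = ⌊x⌋` gives `∑_{d ≤ N} λ(d) ⌊N/d⌋ = ⌊√N⌋`. Writing
`N/d = ⌊N/d⌋ + (N mod d)/d` then yields `N · ∑_{d ≤ N} λ(d)/d = ⌊√N⌋ + R` with `|R| < N`, so the
left side is less than `2N` in absolute value.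
-/

open Finset

namespace Nat

theorem isSquare_iff_forall_even_factorization {n : ℕ} (hn : n ≠ 0) :
    IsSquare n ↔ ∀ p, Even (n.factorization p) := by
  constructor
  · rintro ⟨m, rfl⟩ p
    simp [← sq, factorization_pow]
  · intro h
    refine ⟨n.factorization.prod fun p k => p ^ (k / 2), ?_⟩
    rw [← Finsupp.prod_mul]
    conv_lhs => rw [← prod_factorization_pow_eq_self hn]
    refine Finsupp.prod_congr fun p _ => ?_
    rw [← pow_add, ← two_mul, two_mul_div_two_of_even (h p)]

theorem card_filter_isSquare_Ioc (N : ℕ) : #{n ∈ Ioc 0 N | IsSquare n} = Nat.sqrt N := by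
  have : {n ∈ Ioc 0 N | IsSquare n} = (Ioc 0 N.sqrt).image fun k => k * k := by
    ext n
    simp only [mem_filter, mem_Ioc, mem_image]
    constructor
    · rintro ⟨⟨hn, hnN⟩, k, rfl⟩
      exact ⟨k, ⟨pos_of_ne_zero fun h => by simp [h] at hn, le_sqrt.2 hnN⟩, rfl⟩
    · rintro ⟨k, ⟨hk, hkN⟩, rfl⟩
      exact ⟨⟨Nat.mul_pos hk hk, le_sqrt.1 hkN⟩, k, rfl⟩
  rw [this, Finset.card_image_of_injective _ fun a b => mul_self_inj.1, card_Ioc, Nat.sub_zero]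

end Nat

namespace ArithmeticFunction

theorem liouville_mul_zeta_apply_prime_pow {p : ℕ} (hp : p.Prime) (k : ℕ) :
    (liouville * zeta : ArithmeticFunction ℤ) (p ^ k) = if Even k then 1 else 0 := by
  rw [coe_mul_zeta_apply, Nat.sum_divisors_prime_pow hp]
  simp only [liouville_apply (pow_ne_zero _ hp.ne_zero), cardFactors_apply_prime_pow hp,
    neg_one_geom_sum, Nat.even_add_one, ite_not]

theorem liouville_mul_zeta_apply {n : ℕ} (hn : n ≠ 0) :
    (liouville * zeta : ArithmeticFunction ℤ) n = if IsSquare n then 1 else 0 := by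
  rw [(isMultiplicative_liouville.mul isMultiplicative_zeta.natCast).multiplicative_factorization
    _ hn, Finsupp.prod, Nat.support_factorization, prod_congr rfl fun p hp =>
    liouville_mul_zeta_apply_prime_pow (Nat.prime_of_mem_primeFactors hp) _, prod_boole]
  refine if_congr ?_ rfl rfl
  rw [Nat.isSquare_iff_forall_even_factorization hn]
  refine ⟨fun h p => ?_, fun h p _ => h p⟩
  by_cases hp : p ∈ n.primeFactors
  · exact h p hp
  · rw [← Nat.support_factorization, Finsupp.notMem_support_iff] at hp
    simp [hp]

theorem sum_Ioc_liouville_mul_div (N : ℕ) :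
    ∑ n ∈ Ioc 0 N, liouville n * (N / n : ℕ) = (N.sqrt : ℤ) := by
  rw [← sum_Ioc_mul_zeta_eq_sum, sum_congr rfl fun n hn =>
    liouville_mul_zeta_apply (mem_Ioc.1 hn).1.ne', sum_boole, Nat.card_filter_isSquare_Ioc]

theorem abs_liouville_le_one (n : ℕ) : |(liouville n : ℝ)| ≤ 1 := by
  rcases eq_or_ne n 0 with rfl | hn
  · simp
  · simp [liouville_apply hn]

theorem natCast_mul_sum_Ioc_liouville_div (N : ℕ) :
    (N : ℝ) * ∑ n ∈ Ioc 0 N, (liouville n : ℝ) / n =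
      N.sqrt + ∑ n ∈ Ioc 0 N, (liouville n : ℝ) * ((N % n : ℕ) / n) := by
  have h := congrArg (Int.cast : ℤ → ℝ) (sum_Ioc_liouville_mul_div N)
  simp only [Int.cast_sum, Int.cast_mul, Int.cast_natCast] at h
  rw [← h, mul_sum, ← sum_add_distrib]
  refine sum_congr rfl fun n hn => ?_
  have hn : (n : ℝ) ≠ 0 := Nat.cast_ne_zero.2 (mem_Ioc.1 hn).1.ne'
  conv_lhs => rw [← Nat.div_add_mod N n]
  push_cast
  field_simp

theorem sum_Ioc_mod_div_lt {N : ℕ} (hN : 0 < N) :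
    ∑ n ∈ Ioc 0 N, ((N % n : ℕ) : ℝ) / n < N := by
  calc ∑ n ∈ Ioc 0 N, ((N % n : ℕ) : ℝ) / n < ∑ _n ∈ Ioc 0 N, (1 : ℝ) :=
        sum_lt_sum_of_nonempty ⟨N, by simp [hN]⟩ fun n hn => by
          have hn : 0 < n := (mem_Ioc.1 hn).1
          exact (div_lt_one (Nat.cast_pos.2 hn)).2 (Nat.cast_lt.2 (Nat.mod_lt N hn))
    _ = N := by simp

theorem abs_sum_Ioc_liouville_div_lt_two {N : ℕ} (hN : 0 < N) :
    |∑ n ∈ Ioc 0 N, (liouville n : ℝ) / n| < 2 := by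
  have hR : |∑ n ∈ Ioc 0 N, (liouville n : ℝ) * ((N % n : ℕ) / n)| ≤
      ∑ n ∈ Ioc 0 N, ((N % n : ℕ) : ℝ) / n := by
    refine (abs_sum_le_sum_abs _ _).trans (sum_le_sum fun n _ => ?_)
    rw [abs_mul, abs_of_nonneg (a := ((N % n : ℕ) : ℝ) / n) (by positivity)]
    exact mul_le_of_le_one_left (by positivity) (abs_liouville_le_one n)
  have hsqrt : (N.sqrt : ℝ) ≤ N := Nat.cast_le.2 N.sqrt_le_self
  have hmul : (N : ℝ) * |∑ n ∈ Ioc 0 N, (liouville n : ℝ) / n| < N * 2 := calc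
    (N : ℝ) * |∑ n ∈ Ioc 0 N, (liouville n : ℝ) / n|
        = |N.sqrt + ∑ n ∈ Ioc 0 N, (liouville n : ℝ) * ((N % n : ℕ) / n)| := by
          rw [← natCast_mul_sum_Ioc_liouville_div, abs_mul, Nat.abs_cast]
      _ ≤ N.sqrt + ∑ n ∈ Ioc 0 N, ((N % n : ℕ) : ℝ) / n :=
          (abs_add_le _ _).trans (by rw [Nat.abs_cast]; gcongr)
      _ < N * 2 := by linarith [sum_Ioc_mod_div_lt hN]
  exact lt_of_mul_lt_mul_left hmul (Nat.cast_nonneg N)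

end ArithmeticFunction

theorem abs_sum_liouville_div_lt_two (x : ℝ) (hx : 1 ≤ x) :
    |∑ n ∈ Finset.Icc 1 ⌊x⌋₊, (_root_.liouville n : ℝ) / n| < 2 := by
  have hN : 0 < ⌊x⌋₊ := Nat.floor_pos.2 hx
  -- Mathlib's `ArithmeticFunction.liouville` agrees with `_root_.liouville` except at `0`.
  have hsum : ∑ n ∈ Icc 1 ⌊x⌋₊, (_root_.liouville n : ℝ) / n =
      ∑ n ∈ Ioc 0 ⌊x⌋₊, (ArithmeticFunction.liouville n : ℝ) / n :=
    sum_congr (Icc_add_one_left_eq_Ioc 0 _) fun n hn => by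
      rw [liouville_apply (Nat.one_le_iff_ne_zero.1 (mem_Icc.1 hn).1), _root_.liouville]
  rw [hsum]
  exact ArithmeticFunction.abs_sum_Ioc_liouville_div_lt_two hN
end
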